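/- arXiv:2402.16297 — 3 statements merged into one kernel-verified Lean document; each statement's English description precedes it below -/
import Mathlib

section
/- For every real a > 0, real ζ > 0, natural number y, and natural number l with l ≤ y, writing p = 1 − exp(−ζ) and letting c(y,l) denote the unsigned Stirling number of the first kind, the following identity of real numbers holds: [Γ(a+y)/(y!·Γ(a)) · (1−p)^a · p^y] · [Γ(a)/Γ(a+y) · c(y,l) · a^l] = [c(y,l) · l! · p^y / (y! · ζ^l)] · [exp(−a·ζ) · (a·ζ)^l / l!]. (This is the Dirichlet-Multinomial-Beta paper's Lemma 1: the joint pmf of y ~ NB(a, p) together with l ~ CRT(y, a) equals the joint pmf of l ~ Pois(a·ζ) together with y ~ SumLog(l, p).) -/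
/-- The unsigned Stirling number of the first kind `c(y, l)`: the coefficient of `X^l`
in the ascending factorial `X (X+1) ⋯ (X+y-1)`. -/
noncomputable def stirling1 (y l : ℕ) : ℕ := (ascPochhammer ℕ y).coeff l

/-- Lemma 1 (Poisson–Logarithmic / CRT augmentation):
`NB(y; a, p) · CRT(l; y, a) = SumLog(y; l, p) · Pois(l; a ζ)` with `p = 1 - exp (-ζ)`. -/
theorem stmt_0 (a ζ : ℝ) (ha : 0 < a) (hζ : 0 < ζ) (y l : ℕ) (hl : l ≤ y) :
    (Real.Gamma (a + y) / ((Nat.factorial y : ℝ) * Real.Gamma a) *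
        Real.rpow (1 - (1 - Real.exp (-ζ))) a * (1 - Real.exp (-ζ)) ^ y) *
      (Real.Gamma a / Real.Gamma (a + y) * (stirling1 y l : ℝ) * a ^ l) =
    ((stirling1 y l : ℝ) * (Nat.factorial l : ℝ) * (1 - Real.exp (-ζ)) ^ y /
        ((Nat.factorial y : ℝ) * ζ ^ l)) *
      (Real.exp (-(a * ζ)) * (a * ζ) ^ l / (Nat.factorial l : ℝ)) := by
  have h1 : (1 : ℝ) - (1 - Real.exp (-ζ)) = Real.exp (-ζ) := by ring
  have h2 : Real.rpow (Real.exp (-ζ)) a = Real.exp (-(a * ζ)) := by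
    show Real.exp (-ζ) ^ a = _; rw [← Real.exp_mul]; ring_nf
  rw [h1, h2]
  have hΓa : Real.Gamma a ≠ 0 := (Real.Gamma_pos_of_pos ha).ne'
  have hΓay : Real.Gamma (a + y) ≠ 0 :=
    (Real.Gamma_pos_of_pos (by positivity)).ne'
  have hy : (Nat.factorial y : ℝ) ≠ 0 := by positivity
  have hlf : (Nat.factorial l : ℝ) ≠ 0 := by positivity
  have hζ' : ζ ≠ 0 := hζ.ne'
  rw [mul_pow]
  field_simp
end

section
/- Fix K ≥ 1, reals r_1,…,r_K > 0 and q ∈ (0,1), and natural numbers n_1,…,n_K with total N = Σ_k n_k and r· = Σ_k r_k. Then ∏_{k=1}^K NB(n_k; r_k, q) = NB(N; r·, q) · DirMult(n_1,…,n_K; N, r_1,…,r_K), i.e. the joint pmf of K independent negative binomial variables with a common probability parameter factorizes as the negative binomial pmf of their sum times the Dirichlet-multinomial pmf of the vector given the sum. (This is the factorization underlying the paper's Lemma 2: conditioned on the total, independent NB(r_k, q) counts are Dirichlet-multinomial distributed.) -/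
open Finset

/-- The negative binomial pmf `NB(n; r, q) = Γ(r+n)/(n!·Γ(r))·(1−q)^r·q^n`. -/
noncomputable def nbPmf (n : ℕ) (r q : ℝ) : ℝ :=
  Real.Gamma (r + n) / ((Nat.factorial n : ℝ) * Real.Gamma r) * Real.rpow (1 - q) r * q ^ n

/-- The Dirichlet-multinomial pmf
`DirMult(n; N, r) = (N!/∏ n_k!)·(Γ(r·)/Γ(r·+N))·∏ Γ(r_k+n_k)/Γ(r_k)` with `N = Σ n_k`. -/
noncomputable def dirMultPmf {K : ℕ} (n : Fin K → ℕ) (r : Fin K → ℝ) : ℝ :=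
  ((Nat.factorial (∑ k, n k) : ℝ) / ∏ k, (Nat.factorial (n k) : ℝ)) *
    (Real.Gamma (∑ k, r k) / Real.Gamma ((∑ k, r k) + (∑ k, n k : ℕ))) *
    ∏ k, Real.Gamma (r k + n k) / Real.Gamma (r k)
/-!
Both sides equal `(∏ₖ Γ(rₖ + nₖ) / (nₖ! Γ(rₖ))) · (1 - q)^r· · q^N`: on the left the powers of
`1 - q` and `q` combine across the factors, on the right the factors `N!` and `Γ(r·)`, `Γ(r· + N)`
of the negative binomial pmf of the total cancel against those of the Dirichlet-multinomial pmf.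
-/

theorem prod_nbPmf {ι : Type*} (s : Finset ι) (n : ι → ℕ) (r : ι → ℝ) {q : ℝ} (hq : q < 1) :
    ∏ k ∈ s, nbPmf (n k) (r k) q =
      (∏ k ∈ s, Real.Gamma (r k + n k) / ((n k).factorial * Real.Gamma (r k))) *
        (1 - q) ^ (∑ k ∈ s, r k) * q ^ (∑ k ∈ s, n k) := by
  simp only [nbPmf, Real.rpow_eq_pow, prod_mul_distrib, prod_pow_eq_pow_sum,
    Real.rpow_sum_of_pos (sub_pos.2 hq)]

theorem nbPmf_sum_mul_dirMultPmf {K : ℕ} (n : Fin K → ℕ) (r : Fin K → ℝ) (q : ℝ)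
    (hr : 0 < ∑ k, r k) :
    nbPmf (∑ k, n k) (∑ k, r k) q * dirMultPmf n r =
      (∏ k, Real.Gamma (r k + n k) / ((n k).factorial * Real.Gamma (r k))) *
        (1 - q) ^ (∑ k, r k) * q ^ (∑ k, n k) := by
  have hΓ : Real.Gamma (∑ k, r k) ≠ 0 := (Real.Gamma_pos_of_pos hr).ne'
  have hΓN : Real.Gamma ((∑ k, r k) + (∑ k, n k : ℕ)) ≠ 0 :=
    (Real.Gamma_pos_of_pos (by positivity)).ne'
  have hN : ((∑ k, n k).factorial : ℝ) ≠ 0 := by positivity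
  simp only [nbPmf, dirMultPmf, Real.rpow_eq_pow, mul_comm ((Nat.factorial _ : ℝ)),
    ← div_div, prod_div_distrib]
  field_simp

theorem stmt_1_general (K : ℕ) (hK : 1 ≤ K) (r : Fin K → ℝ) (hr : ∀ k, 0 < r k)
    (q : ℝ) (hq1 : q < 1) (n : Fin K → ℕ) :
    ∏ k, nbPmf (n k) (r k) q = nbPmf (∑ k, n k) (∑ k, r k) q * dirMultPmf n r := by
  have hsum : 0 < ∑ k, r k := sum_pos (fun k _ => hr k) ⟨⟨0, hK⟩, mem_univ _⟩
  rw [prod_nbPmf _ _ _ hq1, nbPmf_sum_mul_dirMultPmf n r q hsum]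

/-- Independent negative binomials with common probability parameter factorize as the
negative binomial of the total times the Dirichlet-multinomial of the vector given the total. -/
theorem stmt_1 (K : ℕ) (hK : 1 ≤ K) (r : Fin K → ℝ) (hr : ∀ k, 0 < r k)
    (q : ℝ) (hq0 : 0 < q) (hq1 : q < 1) (n : Fin K → ℕ) :
    ∏ k, nbPmf (n k) (r k) q = nbPmf (∑ k, n k) (∑ k, r k) q * dirMultPmf n r :=
  stmt_1_general K hK r hr q hq1 n
end

section
/- Fix K ≥ 1, reals r_1,…,r_K > 0 and q ∈ (0,1), and natural numbers n_1,…,n_K with total N = Σ_k n_k ≥ 1 and r· = Σ_k r_k. Then ∏_{k=1}^K NB(n_k; r_k, q) = (q·(1−q)/N) · DirMult(n_1,…,n_K; N, r_1,…,r_K) · Beta(q; N, r·). (This identity validates the paper's Lemma 2 augmentation: given counts n with total N distributed Dirichlet-multinomially, drawing the auxiliary variable q ~ Beta(N, r·) makes the n_k conditionally independent NB(r_k, q).) -/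
open Finset

/-- The beta density `Beta(q; a, b) = Γ(a+b)/(Γ(a)·Γ(b))·q^{a−1}·(1−q)^{b−1}`. -/
noncomputable def betaPdf (q a b : ℝ) : ℝ :=
  Real.Gamma (a + b) / (Real.Gamma a * Real.Gamma b) *
    Real.rpow q (a - 1) * Real.rpow (1 - q) (b - 1)

/-- The Dirichlet-Multinomial-Beta augmentation identity (paper's Lemma 2):
`∏ NB(n_k; r_k, q) = (q(1−q)/N) · DirMult(n; N, r) · Beta(q; N, r·)`. -/
theorem stmt_2 (K : ℕ) (hK : 1 ≤ K) (r : Fin K → ℝ) (hr : ∀ k, 0 < r k)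
    (q : ℝ) (hq0 : 0 < q) (hq1 : q < 1) (n : Fin K → ℕ) (hN : 1 ≤ ∑ k, n k) :
    ∏ k, nbPmf (n k) (r k) q =
      (q * (1 - q) / (∑ k, n k : ℕ)) * dirMultPmf n r *
        betaPdf q (∑ k, n k : ℕ) (∑ k, r k) := by
  have hne : (univ : Finset (Fin K)).Nonempty := ⟨⟨0, hK⟩, mem_univ _⟩
  set N := ∑ k, n k with hNdef
  set R := ∑ k, r k with hRdef
  have hR : 0 < R := Finset.sum_pos (fun k _ => hr k) hne
  have hq1' : 0 < 1 - q := by linarith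
  have hNpos : (0:ℝ) < (N:ℝ) := by exact_mod_cast hN
  have hGR : 0 < Real.Gamma R := Real.Gamma_pos_of_pos hR
  have hGRN : 0 < Real.Gamma (R + N) := Real.Gamma_pos_of_pos (by positivity)
  -- Γ(N) = (N-1)!
  have hNsucc : N = (N - 1) + 1 := (Nat.succ_pred_eq_of_pos hN).symm
  have hGN : Real.Gamma (N:ℝ) = ((N - 1).factorial : ℝ) := by
    rw [hNsucc]; push_cast; rw [Real.Gamma_nat_eq_factorial]
  have hfac : (N.factorial : ℝ) = (N:ℝ) * ((N - 1).factorial : ℝ) := by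
    conv_lhs => rw [hNsucc]
    rw [Nat.factorial_succ]; push_cast [← hNsucc]; ring
  -- products
  have hprod1 : ∏ k, Real.rpow (1 - q) (r k) = Real.rpow (1 - q) R :=
    (Real.rpow_sum_of_pos hq1' r univ).symm
  have hprod2 : ∏ k, q ^ n k = q ^ N := Finset.prod_pow_eq_pow_sum univ n q
  have hqpow : q ^ N = q * Real.rpow q ((N:ℝ) - 1) := by
    have h := Real.rpow_add hq0 1 ((N:ℝ) - 1)
    rw [Real.rpow_one] at h
    show q ^ (N:ℕ) = q * q ^ ((N:ℝ) - 1)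
    rw [← Real.rpow_natCast q N, ← h]
    congr 1; ring
  have hqpow2 : Real.rpow (1 - q) R = (1 - q) * Real.rpow (1 - q) (R - 1) := by
    have h := Real.rpow_add hq1' 1 (R - 1)
    rw [Real.rpow_one] at h
    show (1 - q) ^ R = (1 - q) * (1 - q) ^ (R - 1)
    rw [← h]
    congr 1; ring
  have hPfac : (0:ℝ) < ∏ k, (Nat.factorial (n k) : ℝ) := by positivity
  have hPGr : (0:ℝ) < ∏ k, Real.Gamma (r k) := by
    exact Finset.prod_pos fun k _ => Real.Gamma_pos_of_pos (hr k)
  have hrq0 : 0 < Real.rpow q ((N:ℝ) - 1) := Real.rpow_pos_of_pos hq0 _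
  have hrq1 : 0 < Real.rpow (1 - q) (R - 1) := Real.rpow_pos_of_pos hq1' _
  simp only [nbPmf, dirMultPmf, betaPdf, ← hNdef, ← hRdef]
  simp only [Finset.prod_mul_distrib, Finset.prod_div_distrib]
  rw [hprod1, hprod2, hqpow, hqpow2, add_comm (N:ℝ) R, hGN, hfac]
  field_simp
end
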